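/- arXiv:1602.08096 — 2 statements merged into one kernel-verified Lean document; each statement's English description precedes it below -/
import Mathlib

section
/- (Averages comparison for local Campanato functions) Let b ∈ LC_{p,λ,P}^{{x₀}}(ℝⁿ), 1 ≤ p < ∞, 0 ≤ λ < 1/γ, and r₁ ≥ r₂ > 0. Then |b_{E(x₀,r₁)} − b_{E(x₀,r₂)}| ≤ C (1 + ln(r₁/r₂)) |E(x₀,r₁)|^λ ‖b‖_{LC_{p,λ,P}^{{x₀}}}, with C independent of b, r₁, r₂. -/
open Real Set MeasureTheory ENNReal

/-!
For balls `A ⊆ C`, Hölder's inequality gives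
`|b_C - b_A| ≤ |A|⁻¹ ∫_C |b - b_C| ≤ |A|⁻¹ |C|^(1+λ) · (|C|^(-(1+λp)) ∫_C |b - b_C|^p)^(1/p)`,
and when `|C| ≤ 2^γ |A|` the right-hand side is at most `2^γ |E(x₀,r₁)|^λ ‖b‖`. Chaining the radii
`r₂, 2r₂, 4r₂, …` up to `r₁` takes `⌈log₂(r₁/r₂)⌉ ≤ (1 + ln(r₁/r₂)) / ln 2` such steps.
-/

/-- `‖b‖_{LC_{p,λ,P}^{x₀}}` is the supremum of this over the balls `s = E(x₀, r)`, `r > 0`. -/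
noncomputable def campanatoOsc {α : Type*} [MeasurableSpace α] (μ : Measure α) (p lam : ℝ)
    (b : α → ℝ) (s : Set α) : ℝ≥0∞ :=
  (μ s ^ (-(1 + lam * p)) * ∫⁻ y in s, ENNReal.ofReal |b y - ⨍ z in s, b z ∂μ| ^ p ∂μ) ^ (1 / p)

section Averages

variable {α : Type*} [MeasurableSpace α] {μ : Measure α} {b : α → ℝ}

theorem ofReal_abs_sub_setAverage_le (c : ℝ) {A C : Set α} (hAC : A ⊆ C) (hA0 : μ A ≠ 0)
    (hAtop : μ A ≠ ∞) (hbA : Integrable b (μ.restrict A)) :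
    ENNReal.ofReal |c - ⨍ z in A, b z ∂μ| ≤ (μ A)⁻¹ * ∫⁻ y in C, ENNReal.ofReal |b y - c| ∂μ := by
  have : IsFiniteMeasure (μ.restrict A) := isFiniteMeasure_restrict.mpr hAtop
  have hmA : 0 < (μ A).toReal := ENNReal.toReal_pos hA0 hAtop
  have hgA : Integrable (fun y => b y - c) (μ.restrict A) := hbA.sub (integrable_const c)
  have hshift : c - ⨍ z in A, b z ∂μ = -((μ A).toReal⁻¹ * ∫ z in A, (b z - c) ∂μ) := by
    rw [setAverage_eq, measureReal_def, smul_eq_mul, integral_sub hbA (integrable_const c),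
      setIntegral_const, smul_eq_mul, measureReal_def]
    field_simp
    ring
  rw [hshift, abs_neg, abs_mul, abs_of_nonneg (inv_nonneg.mpr hmA.le),
    ENNReal.ofReal_mul (inv_nonneg.mpr hmA.le), ENNReal.ofReal_inv_of_pos hmA,
    ENNReal.ofReal_toReal hAtop]
  gcongr
  calc ENNReal.ofReal |∫ z in A, (b z - c) ∂μ|
      ≤ ENNReal.ofReal (∫ z in A, |b z - c| ∂μ) :=
        ENNReal.ofReal_le_ofReal (abs_integral_le_integral_abs)
    _ = ∫⁻ z in A, ENNReal.ofReal |b z - c| ∂μ :=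
        ofReal_integral_eq_lintegral_ofReal hgA.abs (ae_of_all _ fun _ => abs_nonneg _)
    _ ≤ ∫⁻ z in C, ENNReal.ofReal |b z - c| ∂μ := lintegral_mono_set hAC

theorem lintegral_ofReal_abs_le_of_one_le {p : ℝ} (hp : 1 ≤ p) {g : α → ℝ} {C : Set α}
    (hg : AEStronglyMeasurable g (μ.restrict C)) :
    ∫⁻ y in C, ENNReal.ofReal |g y| ∂μ ≤
      (∫⁻ y in C, ENNReal.ofReal |g y| ^ p ∂μ) ^ (1 / p) * μ C ^ (1 - 1 / p) := by
  have hp0 : 0 < p := one_pos.trans_le hp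
  have h := eLpNorm_le_eLpNorm_mul_rpow_measure_univ (p := 1) (q := ENNReal.ofReal p)
    (ENNReal.one_le_ofReal.mpr hp) hg
  rw [eLpNorm_one_eq_lintegral_enorm,
    eLpNorm_eq_lintegral_rpow_enorm_toReal (by simpa using hp0) ENNReal.ofReal_ne_top,
    Measure.restrict_apply_univ, ENNReal.toReal_ofReal hp0.le, ENNReal.toReal_one] at h
  simpa only [Real.enorm_eq_ofReal_abs, one_div, inv_one] using h

theorem rpow_one_div_mul_rpow_eq {p : ℝ} (hp : 0 < p) (lam : ℝ) {V I : ℝ≥0∞} (hV0 : V ≠ 0)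
    (hVtop : V ≠ ∞) :
    I ^ (1 / p) * V ^ (1 - 1 / p) = V ^ (1 + lam) * (V ^ (-(1 + lam * p)) * I) ^ (1 / p) := by
  rw [ENNReal.mul_rpow_of_nonneg _ _ (by positivity), ← ENNReal.rpow_mul, ← mul_assoc,
    ← ENNReal.rpow_add _ _ hV0 hVtop, mul_comm]
  congr 2
  field_simp
  ring

theorem ofReal_abs_setAverage_sub_le {p lam : ℝ} (hp : 1 ≤ p) {A C : Set α} (hAC : A ⊆ C)
    (hA0 : μ A ≠ 0) (hCtop : μ C ≠ ∞) (hbA : Integrable b (μ.restrict A))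
    (hbC : AEStronglyMeasurable b (μ.restrict C)) :
    ENNReal.ofReal |(⨍ z in C, b z ∂μ) - ⨍ z in A, b z ∂μ| ≤
      (μ A)⁻¹ * μ C ^ (1 + lam) * campanatoOsc μ p lam b C := by
  have hC0 : μ C ≠ 0 := fun h => hA0 (measure_mono_null hAC h)
  calc ENNReal.ofReal |(⨍ z in C, b z ∂μ) - ⨍ z in A, b z ∂μ|
      ≤ (μ A)⁻¹ * ∫⁻ y in C, ENNReal.ofReal |b y - ⨍ z in C, b z ∂μ| ∂μ :=
        ofReal_abs_sub_setAverage_le _ hAC hA0 (ne_top_of_le_ne_top hCtop (measure_mono hAC)) hbA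
    _ ≤ (μ A)⁻¹ * ((∫⁻ y in C, ENNReal.ofReal |b y - ⨍ z in C, b z ∂μ| ^ p ∂μ) ^ (1 / p) *
          μ C ^ (1 - 1 / p)) :=
        mul_le_mul_right (lintegral_ofReal_abs_le_of_one_le hp
          (hbC.sub aestronglyMeasurable_const)) _
    _ = (μ A)⁻¹ * μ C ^ (1 + lam) * campanatoOsc μ p lam b C := by
        rw [rpow_one_div_mul_rpow_eq (one_pos.trans_le hp) lam hC0 hCtop, mul_assoc]
        rfl

end Averages

theorem ofReal_abs_sub_le_mul_of_doubling_steps {f : ℝ → ℝ} {K : ℝ≥0∞} {r₁ : ℝ}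
    (hstep : ∀ s s', 0 < s → s ≤ s' → s' ≤ 2 * s → s' ≤ r₁ → ENNReal.ofReal |f s' - f s| ≤ K)
    (N : ℕ) {r₂ : ℝ} (hr₂ : 0 < r₂) (hle : r₂ ≤ r₁) (hN : r₁ ≤ 2 ^ N * r₂) :
    ENNReal.ofReal |f r₁ - f r₂| ≤ N * K := by
  induction N generalizing r₂ with
  | zero => simp [le_antisymm hle (by simpa using hN)]
  | succ N ih =>
    by_cases hdouble : r₁ ≤ 2 * r₂
    · calc ENNReal.ofReal |f r₁ - f r₂| ≤ K := hstep _ _ hr₂ hle hdouble le_rfl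
        _ ≤ (N + 1 : ℕ) * K := le_mul_of_one_le_left' (by exact_mod_cast N.succ_pos)
    · replace hdouble := lt_of_not_ge hdouble
      have hfar : ENNReal.ofReal |f r₁ - f (2 * r₂)| ≤ N * K :=
        ih (by positivity) hdouble.le (by rw [pow_succ] at hN; linarith)
      have hnear : ENNReal.ofReal |f (2 * r₂) - f r₂| ≤ K :=
        hstep _ _ hr₂ (by linarith) le_rfl hdouble.le
      calc ENNReal.ofReal |f r₁ - f r₂|
          ≤ ENNReal.ofReal (|f r₁ - f (2 * r₂)| + |f (2 * r₂) - f r₂|) :=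
            ENNReal.ofReal_le_ofReal (abs_sub_le _ _ _)
        _ = ENNReal.ofReal |f r₁ - f (2 * r₂)| + ENNReal.ofReal |f (2 * r₂) - f r₂| :=
            ENNReal.ofReal_add (abs_nonneg _) (abs_nonneg _)
        _ ≤ N * K + K := add_le_add hfar hnear
        _ = (N + 1 : ℕ) * K := by push_cast; ring

theorem le_two_pow_natCeil_logb {t : ℝ} (ht : 0 < t) : t ≤ 2 ^ ⌈logb 2 t⌉₊ := by
  calc t = 2 ^ logb 2 t := (rpow_logb two_pos (by norm_num) ht).symm
    _ ≤ 2 ^ (⌈logb 2 t⌉₊ : ℝ) := rpow_le_rpow_of_exponent_le one_le_two (Nat.le_ceil _)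
    _ = 2 ^ ⌈logb 2 t⌉₊ := rpow_natCast 2 _

theorem natCeil_logb_two_le {t : ℝ} (ht : 1 ≤ t) :
    (⌈logb 2 t⌉₊ : ℝ) ≤ (1 + Real.log t) / Real.log 2 := by
  have hlog2 : 0 < Real.log 2 := log_pos one_lt_two
  have hlog2_lt : Real.log 2 < 1 := by linarith [log_lt_sub_one_of_pos two_pos (by norm_num)]
  calc (⌈logb 2 t⌉₊ : ℝ) ≤ logb 2 t + 1 := (Nat.ceil_lt_add_one (logb_nonneg one_lt_two ht)).le
    _ = (Real.log t + Real.log 2) / Real.log 2 := by rw [logb]; field_simp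
    _ ≤ (1 + Real.log t) / Real.log 2 := div_le_div_of_nonneg_right (by linarith) hlog2.le

section PowerVolumeBalls

variable {α : Type*} [MeasurableSpace α] {μ : Measure α} {F : ℝ → Set α} {υ : ℝ≥0∞} {γ : ℝ}

theorem measure_le_two_rpow_mul (hγ : 0 ≤ γ)
    (hvol : ∀ r, 0 < r → μ (F r) = υ * ENNReal.ofReal (r ^ γ)) {s s' : ℝ} (hs : 0 < s)
    (hss' : s ≤ s') (hs'2 : s' ≤ 2 * s) :
    μ (F s') ≤ ENNReal.ofReal (2 ^ γ) * μ (F s) := by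
  rw [hvol s' (hs.trans_le hss'), hvol s hs, mul_left_comm,
    ← ENNReal.ofReal_mul (by positivity), ← mul_rpow zero_le_two hs.le]
  gcongr
  linarith

theorem ofReal_abs_setAverage_sub_le_of_le_two_mul {b : α → ℝ} {p lam : ℝ} (hγ : 0 ≤ γ)
    (hp : 1 ≤ p) (hlam0 : 0 ≤ lam) (hF : Monotone F) (hυ0 : υ ≠ 0) (hυtop : υ ≠ ∞)
    (hvol : ∀ r, 0 < r → μ (F r) = υ * ENNReal.ofReal (r ^ γ))
    (hb : ∀ r, 0 < r → MemLp b (ENNReal.ofReal p) (μ.restrict (F r)))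
    {s s' r : ℝ} (hs : 0 < s) (hss' : s ≤ s') (hs'2 : s' ≤ 2 * s) (hs'r : s' ≤ r) :
    ENNReal.ofReal |(⨍ z in F s', b z ∂μ) - ⨍ z in F s, b z ∂μ| ≤
      ENNReal.ofReal (2 ^ γ) * μ (F r) ^ lam * ⨆ r > 0, campanatoOsc μ p lam b (F r) := by
  have hs' : 0 < s' := hs.trans_le hss'
  have hV0 : ∀ r, 0 < r → μ (F r) ≠ 0 := fun r hr => by
    rw [hvol r hr]
    exact mul_ne_zero hυ0 (ENNReal.ofReal_pos.mpr (rpow_pos_of_pos hr γ)).ne'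
  have hVtop : ∀ r, 0 < r → μ (F r) ≠ ∞ := fun r hr => by
    rw [hvol r hr]
    exact ENNReal.mul_ne_top hυtop ENNReal.ofReal_ne_top
  have : IsFiniteMeasure (μ.restrict (F s)) := isFiniteMeasure_restrict.mpr (hVtop s hs)
  have hvolume : (μ (F s))⁻¹ * μ (F s') ^ (1 + lam) ≤ ENNReal.ofReal (2 ^ γ) * μ (F r) ^ lam := by
    calc (μ (F s))⁻¹ * μ (F s') ^ (1 + lam)
        = (μ (F s))⁻¹ * μ (F s') * μ (F s') ^ lam := by
          rw [ENNReal.rpow_add _ _ (hV0 s' hs') (hVtop s' hs'), ENNReal.rpow_one, mul_assoc]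
      _ ≤ (μ (F s))⁻¹ * (ENNReal.ofReal (2 ^ γ) * μ (F s)) * μ (F r) ^ lam := by
          gcongr
          · exact measure_le_two_rpow_mul hγ hvol hs hss' hs'2
          · exact hF hs'r
      _ = ENNReal.ofReal (2 ^ γ) * μ (F r) ^ lam := by
          rw [mul_left_comm, ENNReal.inv_mul_cancel (hV0 s hs) (hVtop s hs), mul_one]
  calc ENNReal.ofReal |(⨍ z in F s', b z ∂μ) - ⨍ z in F s, b z ∂μ|
      ≤ (μ (F s))⁻¹ * μ (F s') ^ (1 + lam) * campanatoOsc μ p lam b (F s') :=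
        ofReal_abs_setAverage_sub_le hp (hF hss') (hV0 s hs) (hVtop s' hs')
          ((hb s hs).integrable (ENNReal.one_le_ofReal.mpr hp)) (hb s' hs').aestronglyMeasurable
    _ ≤ ENNReal.ofReal (2 ^ γ) * μ (F r) ^ lam * ⨆ r > 0, campanatoOsc μ p lam b (F r) :=
        mul_le_mul' hvolume
          (le_iSup₂ (f := fun r (_ : 0 < r) => campanatoOsc μ p lam b (F r)) s' hs')

theorem ofReal_abs_setAverage_sub_le_log {b : α → ℝ} {p lam : ℝ} (hγ : 0 ≤ γ)
    (hp : 1 ≤ p) (hlam0 : 0 ≤ lam) (hF : Monotone F) (hυ0 : υ ≠ 0) (hυtop : υ ≠ ∞)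
    (hvol : ∀ r, 0 < r → μ (F r) = υ * ENNReal.ofReal (r ^ γ))
    (hb : ∀ r, 0 < r → MemLp b (ENNReal.ofReal p) (μ.restrict (F r)))
    {r₁ r₂ : ℝ} (hr₂ : 0 < r₂) (hle : r₂ ≤ r₁) :
    ENNReal.ofReal |(⨍ z in F r₁, b z ∂μ) - ⨍ z in F r₂, b z ∂μ| ≤
      ENNReal.ofReal (2 ^ γ / Real.log 2 * (1 + Real.log (r₁ / r₂))) * μ (F r₁) ^ lam *
        ⨆ r > 0, campanatoOsc μ p lam b (F r) := by
  set N := ⌈logb 2 (r₁ / r₂)⌉₊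
  have hN : r₁ ≤ 2 ^ N * r₂ := by
    rw [← div_le_iff₀ hr₂]
    exact le_two_pow_natCeil_logb (div_pos (hr₂.trans_le hle) hr₂)
  have hNlog : (N : ℝ) * 2 ^ γ ≤ 2 ^ γ / Real.log 2 * (1 + Real.log (r₁ / r₂)) := by
    have := natCeil_logb_two_le ((one_le_div hr₂).mpr hle)
    calc (N : ℝ) * 2 ^ γ ≤ (1 + Real.log (r₁ / r₂)) / Real.log 2 * 2 ^ γ := by gcongr
      _ = 2 ^ γ / Real.log 2 * (1 + Real.log (r₁ / r₂)) := by ring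
  calc ENNReal.ofReal |(⨍ z in F r₁, b z ∂μ) - ⨍ z in F r₂, b z ∂μ|
      ≤ N * (ENNReal.ofReal (2 ^ γ) * μ (F r₁) ^ lam * ⨆ r > 0, campanatoOsc μ p lam b (F r)) :=
        ofReal_abs_sub_le_mul_of_doubling_steps (f := fun r => ⨍ z in F r, b z ∂μ)
          (fun _ _ hs hss' hs'2 hs'r => ofReal_abs_setAverage_sub_le_of_le_two_mul hγ hp hlam0
            hF hυ0 hυtop hvol hb hs hss' hs'2 hs'r) N hr₂ hle hN
    _ = ENNReal.ofReal (N * 2 ^ γ) * μ (F r₁) ^ lam * ⨆ r > 0, campanatoOsc μ p lam b (F r) := by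
        rw [ENNReal.ofReal_mul (Nat.cast_nonneg N), ENNReal.ofReal_natCast, mul_assoc, mul_assoc,
          mul_assoc]
    _ ≤ _ := by gcongr

end PowerVolumeBalls

theorem stmt17_general (n : ℕ) (γ p lam : ℝ) (hγ : 0 < γ) (hp : 1 ≤ p)
    (hlam0 : 0 ≤ lam)
    (ρ : (Fin n → ℝ) → ℝ)
    (υ : ℝ≥0∞) (hυ0 : υ ≠ 0) (hυtop : υ ≠ ⊤)
    (hvol : ∀ (x : Fin n → ℝ) (r : ℝ), 0 < r →
      volume {y : Fin n → ℝ | ρ (x - y) < r} = υ * ENNReal.ofReal (r ^ γ))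
    (x₀ : Fin n → ℝ) :
    ∃ C : ℝ, 0 < C ∧ ∀ b : (Fin n → ℝ) → ℝ,
      (∀ r : ℝ, 0 < r →
        MemLp b (ENNReal.ofReal p) (volume.restrict {y : Fin n → ℝ | ρ (x₀ - y) < r})) →
      ∀ r₁ r₂ : ℝ, 0 < r₂ → r₂ ≤ r₁ →
      ENNReal.ofReal
          |(volume {z : Fin n → ℝ | ρ (x₀ - z) < r₁}).toReal⁻¹ *
              (∫ z in {z : Fin n → ℝ | ρ (x₀ - z) < r₁}, b z) -
            (volume {z : Fin n → ℝ | ρ (x₀ - z) < r₂}).toReal⁻¹ *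
              ∫ z in {z : Fin n → ℝ | ρ (x₀ - z) < r₂}, b z| ≤
        ENNReal.ofReal (C * (1 + Real.log (r₁ / r₂))) *
          (volume {y : Fin n → ℝ | ρ (x₀ - y) < r₁}) ^ lam *
          ⨆ r : ℝ, ⨆ _ : 0 < r,
            ((volume {y : Fin n → ℝ | ρ (x₀ - y) < r}) ^ (-(1 + lam * p)) *
              ∫⁻ y in {y : Fin n → ℝ | ρ (x₀ - y) < r},
                ENNReal.ofReal
                  |b y - (volume {z : Fin n → ℝ | ρ (x₀ - z) < r}).toReal⁻¹ *
                      ∫ z in {z : Fin n → ℝ | ρ (x₀ - z) < r}, b z| ^ p) ^ (1 / p) := by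
  refine ⟨2 ^ γ / Real.log 2, by positivity, fun b hb r₁ r₂ hr₂ hle => ?_⟩
  have hmono : Monotone fun r : ℝ => {y : Fin n → ℝ | ρ (x₀ - y) < r} :=
    fun _ _ h _ hy => lt_of_lt_of_le hy h
  simpa only [campanatoOsc, setAverage_eq, measureReal_def, smul_eq_mul] using
    ofReal_abs_setAverage_sub_le_log hγ.le hp hlam0 hmono hυ0 hυtop (hvol x₀) hb hr₂ hle

/-- Comparison of averages for parabolic local Campanato functions. For
`b ∈ LC_{p,λ,P}^{x₀}`, `1 ≤ p < ∞`, `0 ≤ λ < 1/γ` and `r₁ ≥ r₂ > 0`,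
`|b_{E(x₀,r₁)} - b_{E(x₀,r₂)}| ≤ C (1 + ln(r₁/r₂)) |E(x₀,r₁)|^λ ‖b‖_{LC_{p,λ,P}^{x₀}}`,
with `C` independent of `b, r₁, r₂`. -/
theorem stmt17 (n : ℕ) (γ p lam : ℝ) (hγ : 0 < γ) (hp : 1 ≤ p)
    (hlam0 : 0 ≤ lam) (hlam : lam < 1 / γ)
    (ρ : (Fin n → ℝ) → ℝ) (hρ : ∀ x, 0 ≤ ρ x)
    (υ : ℝ≥0∞) (hυ0 : υ ≠ 0) (hυtop : υ ≠ ⊤)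
    (hvol : ∀ (x : Fin n → ℝ) (r : ℝ), 0 < r →
      volume {y : Fin n → ℝ | ρ (x - y) < r} = υ * ENNReal.ofReal (r ^ γ))
    (x₀ : Fin n → ℝ) :
    ∃ C : ℝ, 0 < C ∧ ∀ b : (Fin n → ℝ) → ℝ,
      (∀ r : ℝ, 0 < r →
        MemLp b (ENNReal.ofReal p) (volume.restrict {y : Fin n → ℝ | ρ (x₀ - y) < r})) →
      ∀ r₁ r₂ : ℝ, 0 < r₂ → r₂ ≤ r₁ →
      ENNReal.ofReal
          |(volume {z : Fin n → ℝ | ρ (x₀ - z) < r₁}).toReal⁻¹ *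
              (∫ z in {z : Fin n → ℝ | ρ (x₀ - z) < r₁}, b z) -
            (volume {z : Fin n → ℝ | ρ (x₀ - z) < r₂}).toReal⁻¹ *
              ∫ z in {z : Fin n → ℝ | ρ (x₀ - z) < r₂}, b z| ≤
        ENNReal.ofReal (C * (1 + Real.log (r₁ / r₂))) *
          (volume {y : Fin n → ℝ | ρ (x₀ - y) < r₁}) ^ lam *
          ⨆ r : ℝ, ⨆ _ : 0 < r,
            ((volume {y : Fin n → ℝ | ρ (x₀ - y) < r}) ^ (-(1 + lam * p)) *
              ∫⁻ y in {y : Fin n → ℝ | ρ (x₀ - y) < r},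
                ENNReal.ofReal
                  |b y - (volume {z : Fin n → ℝ | ρ (x₀ - z) < r}).toReal⁻¹ *
                      ∫ z in {z : Fin n → ℝ | ρ (x₀ - z) < r}, b z| ^ p) ^ (1 / p) :=
  stmt17_general n γ p lam hγ hp hlam0 ρ υ hυ0 hυtop hvol x₀
end

section
/- The pair of functions φ₁(r) = χ_{(1,∞)}(r)^{-1} · r^{β − γ/p} (interpreted as φ₁(r) = r^{β−γ/p} for r > 1 and φ₁(r) = +∞ for r ≤ 1) and φ₂(r) = r^{−γ/p}(1 + r^β), with 0 < β < γ/p, satisfies ∫_r^∞ (essinf_{t<τ<∞} φ₁(τ) τ^{γ/p}) / t^{γ/p + 1} dt ≤ C φ₂(r) for all r > 0, but does not satisfy ∫_r^∞ φ₁(t) dt/t ≤ C φ₂(r) for all r > 0. -/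
/-!
On `(1, ∞)` the weight `φ₁(τ) τ^{γ/p}` is `τ^β`. An upper bound for its essential infimum over
`(t, ∞)` only needs a pointwise bound on a subset of positive measure, and on `(m, 2m]` with
`m = max t 1` the weight is at most `(2m)^β ≤ 2^β (t^β + 1)`. Integrating this bound against
`t^{-γ/p-1}` over `(r, ∞)` gives `2^β (r^{β-γ/p}/(γ/p-β) + r^{-γ/p}/(γ/p))`, a multiple of
`φ₂(r)` because `β < γ/p`.

The pointwise condition fails at `r = 1/2`: `φ₁ = ∞` on `(1/2, 1]`, a set of positive length,
so `∫_{1/2}^∞ φ₁(t) dt/t = ∞` while `C φ₂(1/2)` is finite.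
-/

open Real Set MeasureTheory ENNReal

theorem essInf_restrict_le_of_forall_le {α β : Type*} [MeasurableSpace α] [CompleteLattice β]
    {μ : Measure α} {f : α → β} {s t : Set α} {c : β} (hs : MeasurableSet s) (hst : s ⊆ t)
    (hμs : μ s ≠ 0) (hf : ∀ x ∈ s, f x ≤ c) : essInf f (μ.restrict t) ≤ c :=
  calc essInf f (μ.restrict t)
      ≤ essInf f (μ.restrict s) :=
        essInf_antitone_measure (Measure.restrict_mono hst le_rfl).absolutelyContinuous
    _ ≤ essInf (fun _ => c) (μ.restrict s) := essInf_mono_ae ((ae_restrict_mem hs).mono hf)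
    _ = c := essInf_const c (by rwa [Ne, Measure.restrict_eq_zero])

theorem setLIntegral_eq_top_of_forall_eq_top {α : Type*} [MeasurableSpace α] {μ : Measure α}
    {f : α → ℝ≥0∞} {s t : Set α} (hs : MeasurableSet s) (hst : s ⊆ t) (hμs : μ s ≠ 0)
    (hf : ∀ x ∈ s, f x = ⊤) : ∫⁻ x in t, f x ∂μ = ⊤ := by
  refine top_le_iff.1 ?_
  calc ⊤ = ∫⁻ _ in s, ⊤ ∂μ := by rw [setLIntegral_const, top_mul hμs]
    _ = ∫⁻ x in s, f x ∂μ := setLIntegral_congr_fun hs fun x hx => (hf x hx).symm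
    _ ≤ ∫⁻ x in t, f x ∂μ := lintegral_mono_set hst

theorem integral_Ioi_rpow_neg_sub_one {s r : ℝ} (hs : 0 < s) (hr : 0 < r) :
    ∫ t in Ioi r, t ^ (-s - 1) = r ^ (-s) / s := by
  rw [integral_Ioi_rpow_of_lt (by linarith) hr, sub_add_cancel, neg_div_neg_eq]

theorem essInf_Ioi_le_of_le_rpow {f : ℝ → ℝ≥0∞} {β t : ℝ} (hβ : 0 ≤ β)
    (hf : ∀ τ, 1 < τ → f τ ≤ ENNReal.ofReal (τ ^ β)) (ht : 0 ≤ t) :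
    essInf f (volume.restrict (Ioi t)) ≤ ENNReal.ofReal (2 ^ β * (t ^ β + 1)) := by
  set m := max t 1
  have hm : 1 ≤ m := le_max_right t 1
  have hmβ : m ^ β ≤ t ^ β + 1 := by
    rw [rpow_max ht zero_le_one hβ, Real.one_rpow]
    exact max_le (by linarith) (by linarith [rpow_nonneg ht β])
  refine essInf_restrict_le_of_forall_le (s := Ioc m (2 * m)) measurableSet_Ioc
    (fun τ hτ => (le_max_left t 1).trans_lt hτ.1) (by rw [Real.volume_Ioc, Ne, ofReal_eq_zero, not_le]; linarith)
    fun τ hτ => ?_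
  calc f τ ≤ ENNReal.ofReal (τ ^ β) := hf τ (hm.trans_lt hτ.1)
    _ ≤ ENNReal.ofReal ((2 * m) ^ β) := by
        gcongr
        · linarith [hτ.1]
        · exact hτ.2
    _ ≤ ENNReal.ofReal (2 ^ β * (t ^ β + 1)) := by
        rw [mul_rpow zero_le_two (by linarith)]
        gcongr

theorem lintegral_essInf_mul_rpow_le {f : ℝ → ℝ≥0∞} {β q r : ℝ} (hβ : 0 ≤ β)
    (hβq : β < q) (hf : ∀ τ, 1 < τ → f τ ≤ ENNReal.ofReal (τ ^ β)) (hr : 0 < r) :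
    ∫⁻ t in Ioi r, essInf f (volume.restrict (Ioi t)) * ENNReal.ofReal (t ^ (-q - 1)) ≤
      ENNReal.ofReal (2 ^ β / (q - β)) * ENNReal.ofReal (r ^ (-q) * (1 + r ^ β)) := by
  have hq : 0 < q := hβ.trans_lt hβq
  have hqβ : 0 < q - β := sub_pos.2 hβq
  set h : ℝ → ℝ := fun t => 2 ^ β * (t ^ (-(q - β) - 1) + t ^ (-q - 1))
  have h_int : IntegrableOn h (Ioi r) :=
    ((integrableOn_Ioi_rpow_of_lt (by linarith) hr).add
      (integrableOn_Ioi_rpow_of_lt (by linarith) hr)).const_mul _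
  have h_nonneg : 0 ≤ᵐ[volume.restrict (Ioi r)] h :=
    (ae_restrict_mem measurableSet_Ioi).mono fun t ht => by
      have := hr.trans ht; dsimp [h]; positivity
  calc ∫⁻ t in Ioi r, essInf f (volume.restrict (Ioi t)) * ENNReal.ofReal (t ^ (-q - 1))
      ≤ ∫⁻ t in Ioi r, ENNReal.ofReal (h t) := by
        refine setLIntegral_mono' measurableSet_Ioi fun t ht => ?_
        have ht0 : 0 < t := hr.trans ht
        calc essInf f (volume.restrict (Ioi t)) * ENNReal.ofReal (t ^ (-q - 1))
            ≤ ENNReal.ofReal (2 ^ β * (t ^ β + 1)) * ENNReal.ofReal (t ^ (-q - 1)) := by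
              gcongr; exact essInf_Ioi_le_of_le_rpow hβ hf ht0.le
          _ = ENNReal.ofReal (h t) := by
              rw [← ofReal_mul (by positivity)]
              congr 1
              rw [mul_assoc, add_mul, one_mul, ← rpow_add ht0]
              simp only [h]
              ring_nf
    _ = ENNReal.ofReal (2 ^ β * (r ^ (-(q - β)) / (q - β) + r ^ (-q) / q)) := by
        rw [← ofReal_integral_eq_lintegral_ofReal h_int h_nonneg, integral_const_mul,
          integral_add (integrableOn_Ioi_rpow_of_lt (by linarith) hr)
            (integrableOn_Ioi_rpow_of_lt (by linarith) hr),
          integral_Ioi_rpow_neg_sub_one hqβ hr, integral_Ioi_rpow_neg_sub_one hq hr]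
    _ ≤ ENNReal.ofReal (2 ^ β / (q - β)) * ENNReal.ofReal (r ^ (-q) * (1 + r ^ β)) := by
        rw [← ofReal_mul (by positivity)]
        refine ofReal_le_ofReal ?_
        have hr_split : r ^ (-q) * (1 + r ^ β) = r ^ (-(q - β)) + r ^ (-q) := by
          rw [mul_add, mul_one, ← rpow_add hr, add_comm]; ring_nf
        calc 2 ^ β * (r ^ (-(q - β)) / (q - β) + r ^ (-q) / q)
            ≤ 2 ^ β * (r ^ (-(q - β)) / (q - β) + r ^ (-q) / (q - β)) := by
              gcongr; linarith
          _ = 2 ^ β / (q - β) * (r ^ (-q) * (1 + r ^ β)) := by rw [hr_split]; ring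

theorem stmt19_general (γ p β : ℝ) (hβ0 : 0 < β) (hβ : β < γ / p)
    (φ₁ φ₂ : ℝ → ℝ≥0∞)
    (hφ₁ : ∀ r : ℝ, φ₁ r = if 1 < r then ENNReal.ofReal (r ^ (β - γ / p)) else ⊤)
    (hφ₂ : ∀ r : ℝ, φ₂ r = ENNReal.ofReal (r ^ (-(γ / p)) * (1 + r ^ β))) :
    (∃ C : ℝ≥0∞, C ≠ ⊤ ∧ ∀ r : ℝ, 0 < r →
        (∫⁻ t in Set.Ioi r,
          (essInf (fun τ : ℝ => φ₁ τ * ENNReal.ofReal (τ ^ (γ / p)))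
              (volume.restrict (Set.Ioi t))) * ENNReal.ofReal (t ^ (-(γ / p) - 1))) ≤
          C * φ₂ r) ∧
    ¬(∃ C : ℝ≥0∞, C ≠ ⊤ ∧ ∀ r : ℝ, 0 < r →
        (∫⁻ t in Set.Ioi r, φ₁ t / ENNReal.ofReal t) ≤ C * φ₂ r) := by
  refine ⟨⟨ENNReal.ofReal (2 ^ β / (γ / p - β)), ofReal_ne_top, fun r hr => ?_⟩, ?_⟩
  · rw [hφ₂]
    refine lintegral_essInf_mul_rpow_le hβ0.le hβ (fun τ hτ => ?_) hr
    rw [hφ₁, if_pos hτ, ← ofReal_mul (by positivity), ← rpow_add (by linarith),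
      sub_add_cancel]
  · rintro ⟨C, hC, h⟩
    have h_top : ∫⁻ t in Ioi (1 / 2 : ℝ), φ₁ t / ENNReal.ofReal t = ⊤ :=
      setLIntegral_eq_top_of_forall_eq_top (s := Ioc (1 / 2) 1) measurableSet_Ioc
        Ioc_subset_Ioi_self (by rw [Real.volume_Ioc]; norm_num) fun t ht => by
          rw [hφ₁, if_neg ht.2.not_gt, top_div_of_ne_top ofReal_ne_top]
    have h_finite : C * φ₂ (1 / 2) ≠ ⊤ := mul_ne_top hC (by rw [hφ₂]; exact ofReal_ne_top)
    exact h_finite (top_le_iff.1 (h_top ▸ h _ (by norm_num)))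

/-- With `φ₁(r) = r^{β-γ/p}` for `r > 1` and `φ₁(r) = ∞` for `r ≤ 1`, and
`φ₂(r) = r^{-γ/p}(1 + r^β)`, where `0 < β < γ/p`, the pair `(φ₁, φ₂)` satisfies the
essinf-type condition `∫_r^∞ (essinf_{t<τ<∞} φ₁(τ) τ^{γ/p}) t^{-γ/p-1} dt ≤ C φ₂(r)` for
all `r > 0`, but does not satisfy the pointwise condition `∫_r^∞ φ₁(t) dt/t ≤ C φ₂(r)`. -/
theorem stmt19 (γ p β : ℝ) (hγ : 0 < γ) (hp : 1 ≤ p) (hβ0 : 0 < β) (hβ : β < γ / p)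
    (φ₁ φ₂ : ℝ → ℝ≥0∞)
    (hφ₁ : ∀ r : ℝ, φ₁ r = if 1 < r then ENNReal.ofReal (r ^ (β - γ / p)) else ⊤)
    (hφ₂ : ∀ r : ℝ, φ₂ r = ENNReal.ofReal (r ^ (-(γ / p)) * (1 + r ^ β))) :
    (∃ C : ℝ≥0∞, C ≠ ⊤ ∧ ∀ r : ℝ, 0 < r →
        (∫⁻ t in Set.Ioi r,
          (essInf (fun τ : ℝ => φ₁ τ * ENNReal.ofReal (τ ^ (γ / p)))
              (volume.restrict (Set.Ioi t))) * ENNReal.ofReal (t ^ (-(γ / p) - 1))) ≤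
          C * φ₂ r) ∧
    ¬(∃ C : ℝ≥0∞, C ≠ ⊤ ∧ ∀ r : ℝ, 0 < r →
        (∫⁻ t in Set.Ioi r, φ₁ t / ENNReal.ofReal t) ≤ C * φ₂ r) :=
  stmt19_general γ p β hβ0 hβ φ₁ φ₂ hφ₁ hφ₂
end
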